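/- Let Γ ⊆ ℂ^m be a nonempty closed convex set, Φ and Λ unitary m×m matrices, and Y ∈ ℝ^m with Y_j ≥ 0. Let f_0 ∈ ℂ^m and define the Error-Reduction iterates f_{k+1} = P_o(P_f f_k) for k ≥ 0, where P_f = P_f^0. Suppose a subsequence (f_{k_j}) converges to some h ∈ ℂ^m. Then: (1) if (ΦΛh)_j ≠ 0 for every coordinate j, then h is a fixed point of P_o ∘ P_f, i.e. h = P_o(P_f h); (2) if (ΦΛh)_j = 0 for some j, then there exists θ ∈ ℝ^m such that h = P_o(P_f^θ h). -/

import Mathlib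

open Complex Filter Topology

/-- Euclidean norm on `ℂ^m`. -/
noncomputable def enorm' {m : ℕ} (x : Fin m → ℂ) : ℝ :=
  Real.sqrt (∑ j, ‖x j‖ ^ 2)

/-- The intensity-fitting map `T^θ`. -/
noncomputable def intensityFit {m : ℕ} (Y : Fin m → ℝ) (θ : Fin m → ℝ)
    (G : Fin m → ℂ) : Fin m → ℂ :=
  fun j => if G j = 0 then (Y j : ℂ) * Complex.exp (Complex.I * θ j)
    else (Y j : ℂ) * (G j / (‖G j‖ : ℂ))

/-- The frequency-domain projection `P_f^θ = Λ⁻¹ Φ⁻¹ T^θ Φ Λ`. -/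
noncomputable def freqProj {m : ℕ} (Φ Λ : Matrix (Fin m) (Fin m) ℂ)
    (Y : Fin m → ℝ) (θ : Fin m → ℝ) (h : Fin m → ℂ) : Fin m → ℂ :=
  (Matrix.conjTranspose Λ).mulVec ((Matrix.conjTranspose Φ).mulVec
    (intensityFit Y θ (Φ.mulVec (Λ.mulVec h))))

open Metric Matrix WithLp

/-!
The misfit `d x = infDist x S` to the magnitude set `S = {v | ∀ j, ‖(Φ Λ v) j‖ = Y j}` equals
`‖x - P_f^θ x‖` for every `θ`, since `P_f^θ` picks a nearest point of `S` (it is the coordinatewise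
radial projection onto circles, conjugated by the isometry `Φ Λ`). Along the iterates it does not
increase: `d f_{n+1} ≤ ‖f_{n+1} - P_f f_n‖ ≤ ‖f_n - P_f f_n‖ = d f_n`, as `f_n ∈ Γ`.
By compactness of the torus, `P_f f_{k_j}` converges along a further subsequence, and its limit is
`g = P_f^θ h` for a phase vector `θ` that matters only where `Φ Λ h` vanishes. In the limit,
`‖h - g‖ = d h ≤ ‖P_o g - g‖`, so `h ∈ Γ` is a nearest point of `Γ` to `g`; nearest points on a
convex set are unique in the strictly convex Euclidean norm, whence `h = P_o g`.
-/

section NearestPoint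

variable {α : Type*} [PseudoMetricSpace α]

def IsNearestPoint (s : Set α) (x y : α) : Prop :=
  y ∈ s ∧ ∀ z ∈ s, dist x y ≤ dist x z

theorem IsNearestPoint.dist_eq_infDist {s : Set α} {x y : α} (h : IsNearestPoint s x y) :
    dist x y = infDist x s :=
  le_antisymm ((le_infDist ⟨y, h.1⟩).2 h.2) (infDist_le_dist_of_mem h.1)

theorem IsNearestPoint.preimage_isometryEquiv {β : Type*} [PseudoMetricSpace β] (e : α ≃ᵢ β)
    {s : Set β} {x : α} {y : β} (h : IsNearestPoint s (e x) y) :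
    IsNearestPoint (e ⁻¹' s) x (e.symm y) := by
  refine ⟨by simpa using h.1, fun z hz => ?_⟩
  rw [← e.dist_eq x, e.apply_symm_apply, ← e.dist_eq x]
  exact h.2 _ hz

theorem IsNearestPoint.unique {E : Type*} [NormedAddCommGroup E] [NormedSpace ℝ E]
    [StrictConvexSpace ℝ E] {s : Set E} (hs : Convex ℝ s) {x y z : E}
    (hy : IsNearestPoint s x y) (hz : IsNearestPoint s x z) : y = z := by
  by_contra hne
  have hyz : dist x z = dist x y := le_antisymm (hz.2 y hy.1) (hy.2 z hz.1)
  have hmid := combo_mem_ball_of_ne (a := 1 / 2) (b := 1 / 2)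
    (mem_closedBall'.2 le_rfl) (mem_closedBall'.2 hyz.le) hne (by norm_num) (by norm_num)
    (by norm_num)
  exact (hy.2 _ (hs hy.1 hz.1 (by norm_num) (by norm_num) (by norm_num))).not_gt
    (mem_ball'.1 hmid)

end NearestPoint

section AlternatingProjections

variable {α : Type*} [PseudoMetricSpace α] {Γ S : Set α} {Po : α → α} {f p : ℕ → α}

theorem infDist_succ_le (hPo : ∀ x, IsNearestPoint Γ x (Po x))
    (hp : ∀ n, IsNearestPoint S (f n) (p n)) (hf : ∀ n, f (n + 1) = Po (p n))
    {n : ℕ} (hn : f n ∈ Γ) : infDist (f (n + 1)) S ≤ infDist (f n) S :=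
  calc infDist (f (n + 1)) S ≤ dist (f (n + 1)) (p n) := infDist_le_dist_of_mem (hp n).1
    _ = dist (p n) (Po (p n)) := by rw [hf, dist_comm]
    _ ≤ dist (p n) (f n) := (hPo (p n)).2 _ hn
    _ = infDist (f n) S := by rw [dist_comm, (hp n).dist_eq_infDist]

theorem infDist_antitoneOn (hPo : ∀ x, IsNearestPoint Γ x (Po x))
    (hp : ∀ n, IsNearestPoint S (f n) (p n)) (hf : ∀ n, f (n + 1) = Po (p n)) :
    AntitoneOn (fun n => infDist (f n) S) (Set.Ici 1) := by
  refine antitoneOn_nat_Ici_of_succ_le fun n hn => infDist_succ_le hPo hp hf ?_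
  obtain ⟨n, rfl⟩ := Nat.exists_eq_add_of_le' hn
  exact hf n ▸ (hPo _).1

theorem eq_of_tendsto_alternatingProjection {E : Type*} [NormedAddCommGroup E]
    [NormedSpace ℝ E] [StrictConvexSpace ℝ E] {Γ S : Set E} {Po : E → E} {f p : ℕ → E}
    (hΓc : IsClosed Γ) (hΓ : Convex ℝ Γ) (hPo : ∀ x, IsNearestPoint Γ x (Po x))
    (hp : ∀ n, IsNearestPoint S (f n) (p n)) (hf : ∀ n, f (n + 1) = Po (p n))
    {k : ℕ → ℕ} (hk : Tendsto k atTop atTop) {h g : E}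
    (hfh : Tendsto (fun l => f (k l)) atTop (𝓝 h)) (hpg : Tendsto (fun l => p (k l)) atTop (𝓝 g))
    (hg : IsNearestPoint S h g) : h = Po g := by
  have hh : h ∈ Γ := hΓc.mem_of_tendsto hfh <| (hk.eventually_ge_atTop 1).mono fun l hl => by
    obtain ⟨n, hn⟩ := Nat.exists_eq_add_of_le' hl
    exact hn ▸ hf n ▸ (hPo _).1
  have hle : ∀ n ≥ 1, infDist h S ≤ infDist (f n) S := fun n hn =>
    le_of_tendsto (((continuous_infDist_pt S).tendsto h).comp hfh) <|
      (hk.eventually_ge_atTop n).mono fun l hl =>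
        infDist_antitoneOn hPo hp hf (Set.mem_Ici.2 hn) (Set.mem_Ici.2 (hn.trans hl)) hl
  have hstep : ∀ l, infDist h S ≤ dist (p (k l)) (Po g) := fun l =>
    calc infDist h S ≤ infDist (f (k l + 1)) S := hle _ (Nat.le_add_left 1 _)
      _ ≤ dist (f (k l + 1)) (p (k l)) := infDist_le_dist_of_mem (hp _).1
      _ = dist (p (k l)) (Po (p (k l))) := by rw [hf, dist_comm]
      _ ≤ dist (p (k l)) (Po g) := (hPo _).2 _ (hPo g).1
  have hgPo : infDist h S ≤ dist g (Po g) := ge_of_tendsto' (hpg.dist tendsto_const_nhds) hstep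
  have hnear : IsNearestPoint Γ g h := ⟨hh, fun z hz =>
    calc dist g h = infDist h S := by rw [dist_comm, hg.dist_eq_infDist]
      _ ≤ dist g (Po g) := hgPo
      _ ≤ dist g z := (hPo g).2 z hz⟩
  exact hnear.unique hΓ (hPo g)

end AlternatingProjections

section IntensityFit

variable {m : ℕ} {Y : Fin m → ℝ}

theorem intensityFit_apply_congr {G : Fin m → ℂ} {j : Fin m} (hG : G j ≠ 0) (θ θ' : Fin m → ℝ) :
    intensityFit Y θ G j = intensityFit Y θ' G j := by
  simp [intensityFit, hG]

theorem intensityFit_congr {G : Fin m → ℂ} (hG : ∀ j, G j ≠ 0) (θ θ' : Fin m → ℝ) :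
    intensityFit Y θ G = intensityFit Y θ' G :=
  funext fun j => intensityFit_apply_congr (hG j) θ θ'

theorem continuousAt_intensityFit_apply {u : Fin m → ℂ} {j : Fin m} (hu : u j ≠ 0)
    (θ : Fin m → ℝ) : ContinuousAt (fun G => intensityFit Y θ G j) u := by
  have hev : ∀ᶠ G in 𝓝 u, G j ≠ 0 := (continuous_apply j).continuousAt.eventually_ne hu
  have hcont : ContinuousAt (fun G : Fin m → ℂ => (Y j : ℂ) * (G j / (‖G j‖ : ℂ))) u :=
    continuousAt_const.mul ((continuous_apply j).continuousAt.div
      (continuous_ofReal.comp (continuous_apply j).norm).continuousAt (by simpa using hu))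
  exact hcont.congr (hev.mono fun G hG => by simp [intensityFit, hG])

theorem norm_intensityFit_apply (hY : ∀ j, 0 ≤ Y j) (θ : Fin m → ℝ) (G : Fin m → ℂ) (j : Fin m) :
    ‖intensityFit Y θ G j‖ = Y j := by
  by_cases hG : G j = 0
  · simp [intensityFit, hG, mul_comm I, norm_exp_ofReal_mul_I, abs_of_nonneg (hY j)]
  · simp [intensityFit, hG, abs_of_nonneg (hY j)]

theorem norm_sub_intensityFit_apply (hY : ∀ j, 0 ≤ Y j) (θ : Fin m → ℝ) (G : Fin m → ℂ)
    (j : Fin m) : ‖G j - intensityFit Y θ G j‖ = |‖G j‖ - Y j| := by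
  by_cases hG : G j = 0
  · rw [hG, zero_sub, norm_neg, norm_intensityFit_apply hY, norm_zero, zero_sub, abs_neg,
      abs_of_nonneg (hY j)]
  · have hG' : (‖G j‖ : ℂ) ≠ 0 := by simpa using hG
    have : G j - intensityFit Y θ G j = G j / ‖G j‖ * ((‖G j‖ - Y j : ℝ) : ℂ) := by
      simp only [intensityFit, if_neg hG]
      push_cast
      field_simp
    rw [this, norm_mul, norm_div, Complex.norm_real, norm_norm, div_self (norm_ne_zero_iff.2 hG),
      one_mul, Complex.norm_real, Real.norm_eq_abs]

theorem exists_subseq_tendsto_intensityFit (hY : ∀ j, 0 ≤ Y j) (θ₀ : Fin m → ℝ)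
    {w : ℕ → Fin m → ℂ} {u : Fin m → ℂ} (hw : Tendsto w atTop (𝓝 u)) :
    ∃ θ : Fin m → ℝ, ∃ φ : ℕ → ℕ, StrictMono φ ∧
      Tendsto (fun l => intensityFit Y θ₀ (w (φ l))) atTop (𝓝 (intensityFit Y θ u)) := by
  have hmem : ∀ l, intensityFit Y θ₀ (w l) ∈ Set.univ.pi fun j => sphere (0 : ℂ) (Y j) :=
    fun l j _ => mem_sphere_zero_iff_norm.2 (norm_intensityFit_apply hY θ₀ (w l) j)
  obtain ⟨v, hv, φ, hφ, hlim⟩ :=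
    (isCompact_univ_pi fun j => isCompact_sphere (0 : ℂ) (Y j)).tendsto_subseq hmem
  refine ⟨fun j => arg (v j), φ, hφ, ?_⟩
  suffices hv' : intensityFit Y (fun j => arg (v j)) u = v by rwa [hv']
  funext j
  by_cases hu : u j = 0
  · simp only [intensityFit, if_pos hu]
    rw [← mem_sphere_zero_iff_norm.1 (hv j (Set.mem_univ j)), mul_comm I]
    exact norm_mul_exp_arg_mul_I (v j)
  · rw [intensityFit_apply_congr hu _ θ₀]
    exact tendsto_nhds_unique
      ((continuousAt_intensityFit_apply hu θ₀).tendsto.comp (hw.comp hφ.tendsto_atTop))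
      (((continuous_apply j).tendsto v).comp hlim)

end IntensityFit

section FrequencyProjection

variable {m : ℕ} {Y : Fin m → ℝ}

theorem enorm'_sub_eq_dist (x y : Fin m → ℂ) :
    enorm' (x - y) = dist (toLp 2 x) (toLp 2 y) := by
  rw [enorm', EuclideanSpace.dist_eq]
  simp only [dist_eq_norm, Pi.sub_apply]

theorem isNearestPoint_intensityFit (hY : ∀ j, 0 ≤ Y j) (θ : Fin m → ℝ) (G : Fin m → ℂ) :
    IsNearestPoint {v : EuclideanSpace ℂ (Fin m) | ∀ j, ‖v j‖ = Y j}
      (toLp 2 G) (toLp 2 (intensityFit Y θ G)) := by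
  refine ⟨norm_intensityFit_apply hY θ G, fun v hv => ?_⟩
  rw [EuclideanSpace.dist_eq, EuclideanSpace.dist_eq]
  gcongr with j
  calc dist (G j) (intensityFit Y θ G j) = |‖G j‖ - ‖v j‖| := by
        rw [dist_eq_norm, norm_sub_intensityFit_apply hY, hv j]
    _ ≤ dist (G j) (v j) := (abs_norm_sub_norm_le _ _).trans_eq (dist_eq_norm _ _).symm

variable {Φ Λ : Matrix (Fin m) (Fin m) ℂ}

theorem freqProj_congr {w : Fin m → ℂ} (hw : ∀ j, (Φ *ᵥ Λ *ᵥ w) j ≠ 0) (θ θ' : Fin m → ℝ) :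
    freqProj Φ Λ Y θ w = freqProj Φ Λ Y θ' w := by
  rw [freqProj, freqProj, intensityFit_congr hw]

theorem freqProj_eq (θ : Fin m → ℝ) (w : Fin m → ℂ) :
    freqProj Φ Λ Y θ w = (Φ * Λ)ᴴ *ᵥ intensityFit Y θ ((Φ * Λ) *ᵥ w) := by
  simp [freqProj, conjTranspose_mul, mulVec_mulVec]

theorem isNearestPoint_freqProj (hΦ : Φ ∈ unitaryGroup (Fin m) ℂ)
    (hΛ : Λ ∈ unitaryGroup (Fin m) ℂ) (hY : ∀ j, 0 ≤ Y j) (θ : Fin m → ℝ) (w : Fin m → ℂ) :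
    IsNearestPoint {v : EuclideanSpace ℂ (Fin m) | ∀ j, ‖(Φ *ᵥ Λ *ᵥ ofLp v) j‖ = Y j}
      (toLp 2 w) (toLp 2 (freqProj Φ Λ Y θ w)) := by
  let e : EuclideanSpace ℂ (Fin m) ≃ᵢ EuclideanSpace ℂ (Fin m) :=
    (Unitary.linearIsometryEquiv
      ⟨toEuclideanCLM (n := Fin m) (𝕜 := ℂ) (Φ * Λ), Unitary.map_mem _ (mul_mem hΦ hΛ)⟩
      ).toIsometryEquiv
  have he : ∀ v, ofLp (e v) = (Φ * Λ) *ᵥ ofLp v := fun _ => rfl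
  have hUU : (Φ * Λ) * (Φ * Λ)ᴴ = 1 := mem_unitaryGroup_iff.1 (mul_mem hΦ hΛ)
  have hS : {v : EuclideanSpace ℂ (Fin m) | ∀ j, ‖(Φ *ᵥ Λ *ᵥ ofLp v) j‖ = Y j} =
      e ⁻¹' {v | ∀ j, ‖v j‖ = Y j} := by
    ext v
    simp only [Set.mem_ofPred_eq, Set.mem_preimage, he, mulVec_mulVec]
  have hP : toLp 2 (freqProj Φ Λ Y θ w) = e.symm (toLp 2 (intensityFit Y θ ((Φ * Λ) *ᵥ w))) := by
    rw [eq_comm, IsometryEquiv.symm_apply_eq, ← toLp_ofLp 2 (e _), he, freqProj_eq, mulVec_mulVec,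
      hUU, one_mulVec]
  rw [hS, hP]
  exact (isNearestPoint_intensityFit hY θ _).preimage_isometryEquiv e

end FrequencyProjection

theorem error_reduction_subsequential_limit_fixed_point_general
    (m : ℕ)
    (Γ : Set (Fin m → ℂ)) (hΓclosed : IsClosed Γ)
    (hΓconvex : Convex ℝ Γ)
    (Φ Λ : Matrix (Fin m) (Fin m) ℂ)
    (hΦ : Φ ∈ Matrix.unitaryGroup (Fin m) ℂ)
    (hΛ : Λ ∈ Matrix.unitaryGroup (Fin m) ℂ)
    (Y : Fin m → ℝ) (hY : ∀ j, 0 ≤ Y j)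
    (Po : (Fin m → ℂ) → (Fin m → ℂ))
    (hPo : ∀ x, Po x ∈ Γ ∧ ∀ y ∈ Γ, enorm' (Po x - x) ≤ enorm' (y - x))
    (f : ℕ → (Fin m → ℂ))
    (hiter : ∀ k, f (k + 1) = Po (freqProj Φ Λ Y 0 (f k)))
    (k : ℕ → ℕ) (hk : StrictMono k)
    (h : Fin m → ℂ)
    (hlim : Tendsto (fun j => f (k j)) atTop (𝓝 h)) :
    ((∀ j, (Φ.mulVec (Λ.mulVec h)) j ≠ 0) → h = Po (freqProj Φ Λ Y 0 h)) ∧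
    ((∃ j, (Φ.mulVec (Λ.mulVec h)) j = 0) →
      ∃ θ : Fin m → ℝ, h = Po (freqProj Φ Λ Y θ h)) := by
  obtain ⟨θ, φ, hφ, hT⟩ := exists_subseq_tendsto_intensityFit hY 0
    (((continuous_const.matrix_mulVec continuous_id (A := fun _ => Φ * Λ)).tendsto h).comp hlim)
  -- The argument runs in `EuclideanSpace ℂ (Fin m)`, whose distance is `enorm'` of the difference.
  have hΓ : IsClosed (ofLp ⁻¹' Γ : Set (EuclideanSpace ℂ (Fin m))) :=
    hΓclosed.preimage (PiLp.continuous_ofLp 2 _)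
  have hΓc : Convex ℝ (ofLp ⁻¹' Γ : Set (EuclideanSpace ℂ (Fin m))) :=
    fun x hx y hy a b ha hb hab => by simpa using hΓconvex hx hy ha hb hab
  have hPo' (x : EuclideanSpace ℂ (Fin m)) : IsNearestPoint (ofLp ⁻¹' Γ) x (toLp 2 (Po (ofLp x))) :=
    ⟨(hPo _).1, fun y hy => by simpa [dist_comm x, enorm'_sub_eq_dist] using (hPo _).2 _ hy⟩
  have hfh : Tendsto (fun l => toLp 2 (f (k (φ l))) : ℕ → EuclideanSpace ℂ (Fin m)) atTop
      (𝓝 (toLp 2 h)) :=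
    ((PiLp.continuous_toLp 2 _).tendsto h).comp (hlim.comp hφ.tendsto_atTop)
  have hpg : Tendsto
      (fun l => toLp 2 (freqProj Φ Λ Y 0 (f (k (φ l)))) : ℕ → EuclideanSpace ℂ (Fin m)) atTop
      (𝓝 (toLp 2 (freqProj Φ Λ Y θ h))) := by
    simp only [freqProj_eq]
    exact (((PiLp.continuous_toLp 2 _).comp
      (continuous_const.matrix_mulVec continuous_id)).tendsto _).comp hT
  have hfix : h = Po (freqProj Φ Λ Y θ h) := toLp_injective 2 <|
    eq_of_tendsto_alternatingProjection (k := fun l => k (φ l))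
      (f := fun n => toLp 2 (f n)) (p := fun n => toLp 2 (freqProj Φ Λ Y 0 (f n)))
      (S := {v | ∀ j, ‖(Φ *ᵥ Λ *ᵥ ofLp v) j‖ = Y j}) hΓ hΓc hPo'
      (fun n => isNearestPoint_freqProj hΦ hΛ hY 0 (f n)) (fun n => congrArg (toLp 2) (hiter n))
      (hk.comp hφ).tendsto_atTop hfh hpg (isNearestPoint_freqProj hΦ hΛ hY θ h)
  refine ⟨fun hne => ?_, fun _ => ⟨θ, hfix⟩⟩
  rwa [freqProj_congr hne θ 0] at hfix

/-- Every limit of a convergent subsequence of the Error-Reduction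
iterates is a fixed point of `P_o ∘ P_f` (if `ΦΛh` vanishes nowhere) or of
`P_o ∘ P_f^θ` for some `θ` (otherwise). -/
theorem error_reduction_subsequential_limit_fixed_point
    (m : ℕ) (hm : 1 ≤ m)
    (Γ : Set (Fin m → ℂ)) (hΓne : Γ.Nonempty) (hΓclosed : IsClosed Γ)
    (hΓconvex : Convex ℝ Γ)
    (Φ Λ : Matrix (Fin m) (Fin m) ℂ)
    (hΦ : Φ ∈ Matrix.unitaryGroup (Fin m) ℂ)
    (hΛ : Λ ∈ Matrix.unitaryGroup (Fin m) ℂ)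
    (Y : Fin m → ℝ) (hY : ∀ j, 0 ≤ Y j)
    (Po : (Fin m → ℂ) → (Fin m → ℂ))
    (hPo : ∀ x, Po x ∈ Γ ∧ ∀ y ∈ Γ, enorm' (Po x - x) ≤ enorm' (y - x))
    (f : ℕ → (Fin m → ℂ))
    (hiter : ∀ k, f (k + 1) = Po (freqProj Φ Λ Y 0 (f k)))
    (k : ℕ → ℕ) (hk : StrictMono k)
    (h : Fin m → ℂ)
    (hlim : Tendsto (fun j => f (k j)) atTop (𝓝 h)) :
    ((∀ j, (Φ.mulVec (Λ.mulVec h)) j ≠ 0) → h = Po (freqProj Φ Λ Y 0 h)) ∧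
    ((∃ j, (Φ.mulVec (Λ.mulVec h)) j = 0) →
      ∃ θ : Fin m → ℝ, h = Po (freqProj Φ Λ Y θ h)) :=
  error_reduction_subsequential_limit_fixed_point_general m Γ hΓclosed hΓconvex Φ Λ hΦ hΛ Y hY Po
    hPo f hiter k hk h hlim
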